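/- For probability density functions p, q ∈ L^α(μ) with α > 1, the Minkowski log-ratio distance L_α(p,q) := log((‖p‖_α + ‖q‖_α)/‖p+q‖_α) is nonnegative, and equals 0 if and only if p = q almost everywhere. -/

import Mathlib

/-!
Minkowski's inequality for `α > 1` comes from convexity of `t ↦ t ^ α`: with `A = ‖p‖_α`,
`B = ‖q‖_α`, the point `(p + q) / (A + B)` is the convex combination of `p / A` and `q / B` with
weights `A / (A + B)` and `B / (A + B)`, and integrating the convexity gap gives
`1 - (‖p + q‖_α / (A + B)) ^ α ≥ 0`. If `L_α(p, q) = 0` the nonnegative gap integrates to zero,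
so by strict convexity `p / A = q / B` almost everywhere; since `p` and `q` both integrate to `1`,
this forces `A = B` and `p = q`.
-/

open MeasureTheory Real

noncomputable section

/-- `‖f‖_α` for nonnegative `f`; for negative values `f x ^ α` is a junk value. -/
def powNorm {X : Type*} [MeasurableSpace X] (μ : Measure X) (α : ℝ) (f : X → ℝ) : ℝ :=
  (∫ x, f x ^ α ∂μ) ^ (1 / α)

def minkowskiGap (α A B a b : ℝ) : ℝ :=
  A / (A + B) * (a / A) ^ α + B / (A + B) * (b / B) ^ α - ((a + b) / (A + B)) ^ α

end

section Pointwise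

variable {α A B a b : ℝ}

lemma weighted_mean_div_add_div (hA : 0 < A) (hB : 0 < B) :
    A / (A + B) * (a / A) + B / (A + B) * (b / B) = (a + b) / (A + B) := by
  field_simp

lemma minkowskiGap_nonneg (hα : 1 ≤ α) (hA : 0 < A) (hB : 0 < B) (ha : 0 ≤ a) (hb : 0 ≤ b) :
    0 ≤ minkowskiGap α A B a b := by
  have hAB : 0 < A + B := add_pos hA hB
  have h := (convexOn_rpow hα).2 (Set.mem_Ici.2 (div_nonneg ha hA.le))
    (Set.mem_Ici.2 (div_nonneg hb hB.le)) (div_nonneg hA.le hAB.le) (div_nonneg hB.le hAB.le)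
    (by field_simp)
  simp only [smul_eq_mul, weighted_mean_div_add_div hA hB] at h
  exact sub_nonneg.2 h

lemma div_eq_div_of_minkowskiGap_eq_zero (hα : 1 < α) (hA : 0 < A) (hB : 0 < B) (ha : 0 ≤ a)
    (hb : 0 ≤ b) (h : minkowskiGap α A B a b = 0) : a / A = b / B := by
  have hAB : 0 < A + B := add_pos hA hB
  by_contra hne
  have hs := (strictConvexOn_rpow hα).2 (Set.mem_Ici.2 (div_nonneg ha hA.le))
    (Set.mem_Ici.2 (div_nonneg hb hB.le)) hne (div_pos hA hAB) (div_pos hB hAB) (by field_simp)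
  simp only [smul_eq_mul, weighted_mean_div_add_div hA hB] at hs
  exact (sub_pos.2 hs).ne' h

end Pointwise

section PowNorm

variable {X : Type*} [MeasurableSpace X] {μ : Measure X} {α c : ℝ} {f g : X → ℝ}

lemma powNorm_nonneg (hf : ∀ x, 0 ≤ f x) : 0 ≤ powNorm μ α f :=
  rpow_nonneg (integral_nonneg fun x ↦ rpow_nonneg (hf x) α) _

lemma powNorm_rpow (hα : α ≠ 0) (hf : ∀ x, 0 ≤ f x) :
    powNorm μ α f ^ α = ∫ x, f x ^ α ∂μ := by
  rw [powNorm, ← rpow_mul (integral_nonneg fun x ↦ rpow_nonneg (hf x) α),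
    one_div_mul_cancel hα, rpow_one]

lemma powNorm_congr_ae (h : f =ᵐ[μ] g) : powNorm μ α f = powNorm μ α g := by
  rw [powNorm, powNorm, integral_congr_ae (h.mono fun x hx ↦ by rw [hx])]

lemma powNorm_const_mul (hα : α ≠ 0) (hc : 0 ≤ c) (hf : ∀ x, 0 ≤ f x) :
    powNorm μ α (fun x ↦ c * f x) = c * powNorm μ α f := by
  simp_rw [powNorm, mul_rpow hc (hf _), integral_const_mul]
  rw [mul_rpow (rpow_nonneg hc α) (integral_nonneg fun x ↦ rpow_nonneg (hf x) α),
    ← rpow_mul hc, mul_one_div_cancel hα, rpow_one]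

lemma powNorm_pos (hα : α ≠ 0) (hf : ∀ x, 0 ≤ f x) (hfi : Integrable (fun x ↦ f x ^ α) μ)
    (hI : ∫ x, f x ∂μ ≠ 0) : 0 < powNorm μ α f := by
  refine rpow_pos_of_pos ((integral_nonneg fun x ↦ rpow_nonneg (hf x) α).lt_of_ne' fun h ↦ hI ?_) _
  have hf0 : f =ᵐ[μ] 0 :=
    ((integral_eq_zero_iff_of_nonneg (fun x ↦ rpow_nonneg (hf x) α) hfi).1 h).mono
      fun x hx ↦ by simpa [rpow_eq_zero (hf x) hα] using hx
  simp [integral_congr_ae hf0]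

lemma MeasureTheory.MemLp.integrable_rpow_of_nonneg (hα : 0 < α) (hf : MemLp f (ENNReal.ofReal α) μ)
    (hf0 : ∀ x, 0 ≤ f x) : Integrable (fun x ↦ f x ^ α) μ := by
  simpa [ENNReal.toReal_ofReal hα.le, abs_of_nonneg (hf0 _)] using
    hf.integrable_norm_rpow (by simpa using hα) ENNReal.ofReal_ne_top

lemma integrable_div_rpow (hf : ∀ x, 0 ≤ f x) (hc : 0 ≤ c) (hfi : Integrable (fun x ↦ f x ^ α) μ) :
    Integrable (fun x ↦ (f x / c) ^ α) μ :=
  (hfi.div_const (c ^ α)).congr (ae_of_all _ fun x ↦ (div_rpow (hf x) hc α).symm)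

lemma integral_div_rpow (hα : α ≠ 0) (hf : ∀ x, 0 ≤ f x) (hc : 0 ≤ c) :
    ∫ x, (f x / c) ^ α ∂μ = (powNorm μ α f / c) ^ α := by
  simp_rw [div_rpow (hf _) hc, integral_div]
  rw [div_rpow (powNorm_nonneg hf) hc, powNorm_rpow hα hf]

end PowNorm

section Minkowski

variable {X : Type*} [MeasurableSpace X] {μ : Measure X} {α : ℝ} {f g : X → ℝ}

lemma integrable_minkowskiGap {A B : ℝ} (hf : ∀ x, 0 ≤ f x) (hg : ∀ x, 0 ≤ g x) (hA : 0 ≤ A)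
    (hB : 0 ≤ B) (hfi : Integrable (fun x ↦ f x ^ α) μ) (hgi : Integrable (fun x ↦ g x ^ α) μ)
    (hfgi : Integrable (fun x ↦ (f x + g x) ^ α) μ) :
    Integrable (fun x ↦ minkowskiGap α A B (f x) (g x)) μ :=
  (((integrable_div_rpow hf hA hfi).const_mul _).fun_add
    ((integrable_div_rpow hg hB hgi).const_mul _)).sub
    (integrable_div_rpow (fun x ↦ add_nonneg (hf x) (hg x)) (add_nonneg hA hB) hfgi)

lemma integral_minkowskiGap (hα : α ≠ 0) (hf : ∀ x, 0 ≤ f x) (hg : ∀ x, 0 ≤ g x)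
    (hfi : Integrable (fun x ↦ f x ^ α) μ) (hgi : Integrable (fun x ↦ g x ^ α) μ)
    (hfgi : Integrable (fun x ↦ (f x + g x) ^ α) μ)
    (hA : 0 < powNorm μ α f) (hB : 0 < powNorm μ α g) :
    ∫ x, minkowskiGap α (powNorm μ α f) (powNorm μ α g) (f x) (g x) ∂μ =
      1 - (powNorm μ α (fun x ↦ f x + g x) / (powNorm μ α f + powNorm μ α g)) ^ α := by
  have hAB := add_pos hA hB
  have hfg : ∀ x, 0 ≤ f x + g x := fun x ↦ add_nonneg (hf x) (hg x)
  have hf' := (integrable_div_rpow hf hA.le hfi).const_mul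
    (powNorm μ α f / (powNorm μ α f + powNorm μ α g))
  have hg' := (integrable_div_rpow hg hB.le hgi).const_mul
    (powNorm μ α g / (powNorm μ α f + powNorm μ α g))
  unfold minkowskiGap
  rw [integral_sub (hf'.fun_add hg') (integrable_div_rpow hfg hAB.le hfgi),
    integral_add hf' hg', integral_const_mul, integral_const_mul, integral_div_rpow hα hf hA.le,
    integral_div_rpow hα hg hB.le, integral_div_rpow hα hfg hAB.le, div_self hA.ne',
    div_self hB.ne', one_rpow, mul_one, mul_one, ← add_div, div_self hAB.ne']

theorem powNorm_add_le (hα : 1 ≤ α) (hf : ∀ x, 0 ≤ f x) (hg : ∀ x, 0 ≤ g x)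
    (hfi : Integrable (fun x ↦ f x ^ α) μ) (hgi : Integrable (fun x ↦ g x ^ α) μ)
    (hfgi : Integrable (fun x ↦ (f x + g x) ^ α) μ)
    (hA : 0 < powNorm μ α f) (hB : 0 < powNorm μ α g) :
    powNorm μ α (fun x ↦ f x + g x) ≤ powNorm μ α f + powNorm μ α g := by
  have hα0 : 0 < α := zero_lt_one.trans_le hα
  have hAB := add_pos hA hB
  rw [← div_le_one hAB, ← rpow_le_rpow_iff (div_nonneg (powNorm_nonneg fun x ↦
    add_nonneg (hf x) (hg x)) hAB.le) zero_le_one hα0, one_rpow, ← sub_nonneg,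
    ← integral_minkowskiGap hα0.ne' hf hg hfi hgi hfgi hA hB]
  exact integral_nonneg fun x ↦ minkowskiGap_nonneg hα hA hB (hf x) (hg x)

theorem ae_div_eq_div_of_powNorm_add_eq (hα : 1 < α) (hf : ∀ x, 0 ≤ f x) (hg : ∀ x, 0 ≤ g x)
    (hfi : Integrable (fun x ↦ f x ^ α) μ) (hgi : Integrable (fun x ↦ g x ^ α) μ)
    (hfgi : Integrable (fun x ↦ (f x + g x) ^ α) μ)
    (hA : 0 < powNorm μ α f) (hB : 0 < powNorm μ α g)
    (h : powNorm μ α (fun x ↦ f x + g x) = powNorm μ α f + powNorm μ α g) :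
    ∀ᵐ x ∂μ, f x / powNorm μ α f = g x / powNorm μ α g := by
  have hgap : ∫ x, minkowskiGap α (powNorm μ α f) (powNorm μ α g) (f x) (g x) ∂μ = 0 := by
    rw [integral_minkowskiGap (zero_lt_one.trans hα).ne' hf hg hfi hgi hfgi hA hB, h,
      div_self (add_pos hA hB).ne', one_rpow, sub_self]
  filter_upwards [(integral_eq_zero_iff_of_nonneg
    (fun x ↦ minkowskiGap_nonneg hα.le hA hB (hf x) (hg x))
    (integrable_minkowskiGap hf hg hA.le hB.le hfi hgi hfgi)).1 hgap] with x hx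
  exact div_eq_div_of_minkowskiGap_eq_zero hα hA hB (hf x) (hg x) hx

lemma ae_eq_of_ae_div_eq_div {A B : ℝ} (hA : A ≠ 0) (hB : B ≠ 0)
    (h : ∀ᵐ x ∂μ, f x / A = g x / B) (hfg : ∫ x, f x ∂μ = ∫ x, g x ∂μ)
    (hg : ∫ x, g x ∂μ ≠ 0) : f =ᵐ[μ] g := by
  have hf : f =ᵐ[μ] fun x ↦ A / B * g x := h.mono fun x hx ↦ by
    rw [div_eq_div_iff hA hB] at hx
    field_simp
    linarith
  have hAB : A / B = 1 := by
    have := integral_congr_ae hf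
    rw [integral_const_mul, hfg] at this
    exact (mul_eq_right₀ hg).1 this.symm
  simpa [hAB] using hf

end Minkowski

/-- For probability densities `p, q ∈ L^α(μ)` with `α > 1`, the Minkowski
log-ratio distance `L_α(p,q) = log((‖p‖_α + ‖q‖_α)/‖p+q‖_α)` is nonnegative and
vanishes iff `p = q` almost everywhere. -/
theorem minkowski_log_ratio_distance_nonneg_and_eq_zero_iff
    {X : Type*} [MeasurableSpace X] (μ : Measure X) (α : ℝ) (hα : 1 < α)
    (p q : X → ℝ) (hp0 : ∀ x, 0 ≤ p x) (hq0 : ∀ x, 0 ≤ q x)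
    (hp : MemLp p (ENNReal.ofReal α) μ) (hq : MemLp q (ENNReal.ofReal α) μ)
    (hpi : ∫ x, p x ∂μ = 1) (hqi : ∫ x, q x ∂μ = 1) :
    0 ≤ Real.log (((∫ x, |p x| ^ α ∂μ) ^ (1/α) + (∫ x, |q x| ^ α ∂μ) ^ (1/α))
          / (∫ x, |p x + q x| ^ α ∂μ) ^ (1/α)) ∧
    (Real.log (((∫ x, |p x| ^ α ∂μ) ^ (1/α) + (∫ x, |q x| ^ α ∂μ) ^ (1/α))
          / (∫ x, |p x + q x| ^ α ∂μ) ^ (1/α)) = 0 ↔ p =ᵐ[μ] q) := by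
  have hα0 : 0 < α := zero_lt_one.trans hα
  have hpq0 : ∀ x, 0 ≤ p x + q x := fun x ↦ add_nonneg (hp0 x) (hq0 x)
  simp only [abs_of_nonneg (hp0 _), abs_of_nonneg (hq0 _), abs_of_nonneg (hpq0 _)]
  change 0 ≤ log ((powNorm μ α p + powNorm μ α q) / powNorm μ α (fun x ↦ p x + q x)) ∧
    (log ((powNorm μ α p + powNorm μ α q) / powNorm μ α (fun x ↦ p x + q x)) = 0 ↔ p =ᵐ[μ] q)
  have hpα := hp.integrable_rpow_of_nonneg hα0 hp0
  have hqα := hq.integrable_rpow_of_nonneg hα0 hq0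
  have hpqα := (hp.add hq).integrable_rpow_of_nonneg hα0 hpq0
  have hA := powNorm_pos hα0.ne' hp0 hpα (by simp [hpi])
  have hB := powNorm_pos hα0.ne' hq0 hqα (by simp [hqi])
  have hC := powNorm_pos hα0.ne' hpq0 hpqα (by
    rw [integral_add (.of_integral_ne_zero (by simp [hpi])) (.of_integral_ne_zero (by simp [hqi])),
      hpi, hqi]
    norm_num)
  have hle := powNorm_add_le hα.le hp0 hq0 hpα hqα hpqα hA hB
  refine ⟨log_nonneg ((one_le_div hC).2 hle), fun h ↦ ?_, fun h ↦ ?_⟩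
  · have hsum := (div_eq_one_iff_eq hC.ne').1 (eq_one_of_pos_of_log_eq_zero (by positivity) h)
    exact ae_eq_of_ae_div_eq_div hA.ne' hB.ne'
      (ae_div_eq_div_of_powNorm_add_eq hα hp0 hq0 hpα hqα hpqα hA hB hsum.symm)
      (hpi.trans hqi.symm) (by simp [hqi])
  · have hqp : powNorm μ α q = powNorm μ α p := powNorm_congr_ae h.symm
    have hpq : powNorm μ α (fun x ↦ p x + q x) = 2 * powNorm μ α p := by
      rw [powNorm_congr_ae (g := fun x ↦ 2 * p x) (h.mono fun x hx ↦ by simp only [hx]; ring),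
        powNorm_const_mul hα0.ne' zero_le_two hp0]
    rw [hqp, hpq, ← two_mul, div_self (by positivity), log_one]
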